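/- Let n be a positive integer with ν₂(n) = v and let k = v + 1. Then the Frobenius number of S = ⟨n, n+2⁰, n+2¹, ..., n+2^k⟩ is F(S) = n²/2^k + (k - 3/2)n - 1. -/

import Mathlib

/-!
Write `n = 2ᵛ(2w + 1)`. An element of `S` is `n·s + P`, where `P` is a sum of at most `s` of the
powers `2⁰, …, 2ᵛ⁺¹`. Binary expansion writes every residue `r < n` as such a sum of at most
`w + v` powers, so every `m ≥ n(w + v)` lies in `S`. Conversely, a sum of these powers equal to
`2ᵛM - 1` needs at least `M / 2 + v` terms (induction on `v`, halving the odd sum). Since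
`n(w + v) - 1 = n·s + P` forces `n ∣ P + 1`, this rules out `n(w + v) - 1 ∈ S`.
Hence `F(S) = n(w + v) - 1 = n²/2ᵛ⁺¹ + (v - 1/2)n - 1`.
-/

open Finset

lemma sum_range_succ_two_pow_mul (f : ℕ → ℕ) (L : ℕ) :
    ∑ i ∈ range (L + 1), 2 ^ i * f i = f 0 + 2 * ∑ i ∈ range L, 2 ^ i * f (i + 1) := by
  rw [sum_range_succ', mul_sum, add_comm]
  simp only [pow_succ, pow_zero, mul_one, mul_comm, mul_left_comm]

lemma le_sum_of_sum_two_pow_mul_add_one_eq {m : ℕ} (v : ℕ) (x : ℕ → ℕ)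
    (h : ∑ i ∈ range (v + 2), 2 ^ i * x i + 1 = 2 ^ v * m) :
    m / 2 + v ≤ ∑ i ∈ range (v + 2), x i := by
  induction v generalizing x with
  | zero =>
    simp only [sum_range_succ, sum_range_zero] at h ⊢
    omega
  | succ v ih =>
    rw [sum_range_succ_two_pow_mul, sum_range_succ_two_pow_mul, pow_succ', mul_assoc] at h
    -- `x 0` is odd: pair up the remaining `2⁰`s into `2¹`s and shift everything down one level
    let x' : ℕ → ℕ := fun i => if i = 0 then x 0 / 2 + x 1 else x (i + 1)
    have hx' := ih x' (by
      rw [sum_range_succ_two_pow_mul]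
      simp only [x', if_pos, Nat.add_one_ne_zero, if_false, zero_add] at h ⊢
      omega)
    rw [sum_range_succ'] at hx'
    rw [sum_range_succ', sum_range_succ']
    simp only [x', if_pos, Nat.add_one_ne_zero, if_false, zero_add] at h hx' ⊢
    omega

lemma exists_sum_two_pow_mul_eq_of_lt {w : ℕ} (v : ℕ) {r : ℕ} (hr : r < 2 ^ v * (2 * w + 1)) :
    ∃ x : ℕ → ℕ, ∑ i ∈ range (v + 2), 2 ^ i * x i = r ∧ ∑ i ∈ range (v + 2), x i ≤ w + v := by
  induction v generalizing r with
  | zero =>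
    refine ⟨fun i => if i = 0 then r % 2 else r / 2, ?_, ?_⟩ <;>
      simp only [sum_range_succ, sum_range_zero, if_pos, one_ne_zero, if_false] <;> omega
  | succ v ih =>
    obtain ⟨x, hsum, hcount⟩ := ih (r := r / 2) (by rw [pow_succ', mul_assoc] at hr; omega)
    refine ⟨fun i => if i = 0 then r % 2 else x (i - 1), ?_, ?_⟩
    · rw [sum_range_succ_two_pow_mul]
      simp only [if_pos, Nat.add_one_ne_zero, if_false, add_tsub_cancel_right, hsum]
      omega
    · rw [sum_range_succ']
      simp only [if_pos, Nat.add_one_ne_zero, if_false, add_tsub_cancel_right]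
      omega

lemma sum_add_two_pow_mul (n L : ℕ) (x : ℕ → ℕ) :
    ∑ i ∈ range L, (n + 2 ^ i) * x i = n * ∑ i ∈ range L, x i + ∑ i ∈ range L, 2 ^ i * x i := by
  simp only [add_mul, sum_add_distrib, mul_sum]

lemma not_exists_add_one_eq_mul {n v w : ℕ} (hn : n = 2 ^ v * (2 * w + 1)) :
    ¬∃ c : ℕ, ∃ x : ℕ → ℕ,
      n * c + ∑ i ∈ range (v + 2), (n + 2 ^ i) * x i + 1 = n * (w + v) := by
  rintro ⟨c, x, h⟩
  rw [sum_add_two_pow_mul] at h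
  set X := ∑ i ∈ range (v + 2), x i
  have hlt : c + X < w + v := Nat.lt_of_mul_lt_mul_left (a := n) (by rw [mul_add]; omega)
  obtain ⟨t, ht⟩ := Nat.exists_eq_add_of_lt hlt
  have hP : ∑ i ∈ range (v + 2), 2 ^ i * x i + 1 = 2 ^ v * ((2 * w + 1) * (t + 1)) := by
    rw [ht] at h
    subst hn
    linarith
  have hX := le_sum_of_sum_two_pow_mul_add_one_eq v x hP
  have : (2 * w + 1) / 2 ≤ (2 * w + 1) * (t + 1) / 2 :=
    Nat.div_le_div_right (Nat.le_mul_of_pos_right _ t.succ_pos)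
  omega

lemma exists_eq_of_mul_le {n v w m : ℕ} (hn : n = 2 ^ v * (2 * w + 1)) (hm : n * (w + v) ≤ m) :
    ∃ c : ℕ, ∃ x : ℕ → ℕ, m = n * c + ∑ i ∈ range (v + 2), (n + 2 ^ i) * x i := by
  have hn0 : 0 < n := hn ▸ by positivity
  obtain ⟨x, hsum, hcount⟩ :=
    exists_sum_two_pow_mul_eq_of_lt v (r := m % n) (by rw [← hn]; exact Nat.mod_lt m hn0)
  have hq : w + v ≤ m / n := (Nat.le_div_iff_mul_le hn0).2 (by rwa [mul_comm])
  refine ⟨m / n - ∑ i ∈ range (v + 2), x i, x, ?_⟩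
  rw [sum_add_two_pow_mul, hsum, ← add_assoc, ← mul_add, Nat.sub_add_cancel (hcount.trans hq),
    Nat.div_add_mod]

lemma exists_eq_two_pow_padicValNat_mul_odd {n : ℕ} (hn : n ≠ 0) :
    ∃ w, n = 2 ^ padicValNat 2 n * (2 * w + 1) := by
  obtain ⟨u, hu⟩ : 2 ^ padicValNat 2 n ∣ n := pow_padicValNat_dvd
  have hodd : ¬2 ∣ u := fun ⟨w, hw⟩ =>
    pow_succ_padicValNat_not_dvd (p := 2) hn ⟨w, by rw [pow_succ, mul_assoc, ← hw]; exact hu⟩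
  exact ⟨u / 2, hu.trans (by congr 1; omega)⟩

/-- Shifted powers of 2, case k = ν₂(n) + 1: the Frobenius number of
⟨n, n+2⁰, …, n+2ᵏ⟩ is n²/2ᵏ + (k - 3/2)n - 1. -/
theorem stmt_15 (n : ℕ) (hn : 0 < n) (F : ℕ)
    (hF : IsGreatest {m : ℕ | ¬∃ c : ℕ, ∃ x : ℕ → ℕ,
        m = n * c + ∑ i ∈ Finset.range (padicValNat 2 n + 2), (n + 2 ^ i) * x i} F) :
    (F : ℚ) = (n : ℚ) ^ 2 / 2 ^ (padicValNat 2 n + 1) +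
      (((padicValNat 2 n : ℚ) + 1) - 3 / 2) * n - 1 := by
  obtain ⟨w, hw⟩ := exists_eq_two_pow_padicValNat_mul_odd hn.ne'
  set v := padicValNat 2 n
  have hlt : F < n * (w + v) := by
    by_contra hge
    exact hF.1 (exists_eq_of_mul_le hw (not_lt.1 hge))
  have hle : n * (w + v) - 1 ≤ F := hF.2 fun ⟨c, x, h⟩ =>
    not_exists_add_one_eq_mul hw ⟨c, x, by omega⟩
  have hF1 : (F : ℚ) + 1 = n * (w + v) := by exact_mod_cast (by omega : F + 1 = n * (w + v))
  rw [eq_sub_of_add_eq hF1, hw]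
  push_cast
  rw [pow_succ]
  field_simp
  ring
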